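/- arXiv:2504.00291 — 2 statements merged into one kernel-verified Lean document; each statement's English description precedes it below -/
import Mathlib

section
/- If G is a connected simple graph on n vertices, then the CZ-distance cz(G) from G to the edgeless graph on the same vertex set is at least n - 1. -/
/-! The number of connected components is invariant under local complementation at `v`: an
edge created between two neighbours of `v`, or deleted between them, is bypassed through `v`.
Toggling a single edge changes that number by at most one. A connected graph has one component
and the edgeless graph on `n` vertices has `n`, so every CZ-sequence between them has at least
`n - 1` edge toggles; and such sequences exist, since the edges can be deleted one at a time, so
the infimum defining `cz` is attained. -/

variable {V : Type*}

open Classical in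
/-- Local complementation at `v`: complement the induced subgraph on `N_G(v)`. -/
noncomputable def localComp (G : SimpleGraph V) (v : V) : SimpleGraph V where
  Adj x y := x ≠ y ∧ (if G.Adj v x ∧ G.Adj v y then ¬ G.Adj x y else G.Adj x y)
  symm := by
    constructor
    intro x y ⟨hxy, h⟩
    refine ⟨hxy.symm, ?_⟩
    by_cases hc : G.Adj v x ∧ G.Adj v y
    · rw [if_pos hc] at h
      rw [if_pos ⟨hc.2, hc.1⟩]
      exact fun h' => h h'.symm
    · rw [if_neg hc] at h
      rw [if_neg (fun h' => hc ⟨h'.2, h'.1⟩)]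
      exact h.symm
  loopless := ⟨fun x hx => hx.1 rfl⟩

/-- Toggle (add or remove) the edge `uv`. -/
def toggle (G : SimpleGraph V) (u v : V) : SimpleGraph V where
  Adj x y := x ≠ y ∧ Xor' (G.Adj x y) ((x = u ∧ y = v) ∨ (x = v ∧ y = u))
  symm := by
    constructor
    intro x y ⟨hxy, h⟩
    refine ⟨hxy.symm, ?_⟩
    rw [G.adj_comm y x]
    unfold Xor' at *
    unfold Xor at *
    tauto
  loopless := ⟨fun x hx => hx.1 rfl⟩

/-- Local equivalence: related by a sequence of local complementations. -/
def LocallyEquiv (G H : SimpleGraph V) : Prop :=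
  Relation.ReflTransGen (fun A B => ∃ v, B = localComp A v) G H

/-- `CZle G H k` : there is a sequence `G = G₀, G₀', G₁, G₁', …, G_k, G_k' = H`
with each `Gᵢ'` locally equivalent to `Gᵢ` and each `Gᵢ` (i ≥ 1) obtained from
`G_{i-1}'` by adding or removing a single edge. -/
inductive CZle : SimpleGraph V → SimpleGraph V → ℕ → Prop
  | base {G H : SimpleGraph V} : LocallyEquiv G H → CZle G H 0
  | step {G G' F H : SimpleGraph V} {k : ℕ} (u v : V) :
      LocallyEquiv G G' → u ≠ v → F = toggle G' u v → CZle F H k → CZle G H (k + 1)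

/-- The CZ-distance between two graphs on the same vertex set. -/
noncomputable def czDist (G H : SimpleGraph V) : ℕ := sInf {k | CZle G H k}

/-- The CZ-distance of a graph: CZ-distance to the edgeless graph. -/
noncomputable def cz (G : SimpleGraph V) : ℕ := czDist G ⊥

open Classical in
/-- Complementing on a vertex set `X`: replace the induced subgraph on `X` by its complement. -/
noncomputable def complOn (G : SimpleGraph V) (X : Set V) : SimpleGraph V :=
  SimpleGraph.fromRel (fun x y => if x ∈ X ∧ y ∈ X then ¬ G.Adj x y else G.Adj x y)

open Classical in
/-- The adjacency matrix over GF(2). -/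
noncomputable def adjMat (G : SimpleGraph V) : Matrix V V (ZMod 2) :=
  fun x y => if G.Adj x y then 1 else 0

/-- `H` is a rank-`p` perturbation of `G`. -/
def IsRankPerturbation [Fintype V] (p : ℕ) (G H : SimpleGraph V) : Prop :=
  ∃ M : Matrix V V (ZMod 2), M.IsSymm ∧ M.rank ≤ p ∧
    ∀ x y : V, x ≠ y → adjMat H x y = adjMat G x y + M x y

/-- `G` is a circle graph: the overlap graph of a family of closed intervals in `ℝ`
with pairwise distinct endpoints. -/
def IsCircleGraph (G : SimpleGraph V) : Prop :=
  ∃ l r : V → ℝ, (∀ v, l v < r v) ∧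
    Function.Injective (fun p : V × Bool => if p.2 then r p.1 else l p.1) ∧
    ∀ x y, G.Adj x y ↔
      ((l x < l y ∧ l y < r x ∧ r x < r y) ∨ (l y < l x ∧ l x < r y ∧ r y < r x))

/-- Two vertex sets are homogeneous: complete or anticomplete to each other. -/
def Homog (G : SimpleGraph V) (X Y : Finset V) : Prop :=
  (∀ x ∈ X, ∀ y ∈ Y, G.Adj x y) ∨ (∀ x ∈ X, ∀ y ∈ Y, ¬ G.Adj x y)

/-- Every part of the partition `P` has red degree (number of other parts it is
inhomogeneous to) at most `k`. -/
def RedDegLE [Fintype V] [DecidableEq V] (G : SimpleGraph V) (P : Finpartition (Finset.univ : Finset V))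
    (k : ℕ) : Prop :=
  ∀ X ∈ P.parts, {Y : Finset V | Y ∈ P.parts ∧ Y ≠ X ∧ ¬ Homog G X Y}.ncard ≤ k

/-- One contraction: merge two parts of the partition. -/
def MergeStep [Fintype V] [DecidableEq V]
    (P Q : Finpartition (Finset.univ : Finset V)) : Prop :=
  ∃ A B, A ∈ P.parts ∧ B ∈ P.parts ∧ A ≠ B ∧
    Q.parts = insert (A ∪ B) ((P.parts.erase A).erase B)

/-- `G` has twin-width at most `k`: there is a contraction (partition) sequence from
the discrete partition to the trivial one in which every partition has red degree at
most `k`. -/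
def TwinWidthLE [Fintype V] [DecidableEq V] (G : SimpleGraph V) (k : ℕ) : Prop :=
  ∃ (m : ℕ) (seq : Fin (m + 1) → Finpartition (Finset.univ : Finset V)),
    (∀ X ∈ (seq 0).parts, X.card = 1) ∧
    (seq (Fin.last m)).parts.card ≤ 1 ∧
    (∀ i : Fin m, MergeStep (seq i.castSucc) (seq i.succ)) ∧
    (∀ i, RedDegLE G (seq i) k)

/-- `H` is obtained from `G` (in which `u` is isolated) by adding all edges between `u`
and `N_G(v)`, possibly adding the edge `uv`, and then adding at most `k` additional
edges incident to `u`. -/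
def ExtendStep (k : ℕ) (G H : SimpleGraph V) (u v : V) : Prop :=
  u ≠ v ∧ G.neighborSet u = ∅ ∧
  (∀ x y, x ≠ u → y ≠ u → (H.Adj x y ↔ G.Adj x y)) ∧
  G.neighborSet v ⊆ H.neighborSet u ∧
  ∃ T : Finset V, T.card ≤ k ∧ H.neighborSet u ⊆ G.neighborSet v ∪ {v} ∪ ↑T

namespace SimpleGraph

lemma reachable_le_of_adj {G H : SimpleGraph V} (h : ∀ a b, G.Adj a b → H.Reachable a b) :
    G.Reachable ≤ H.Reachable := by
  intro x y hxy
  rw [reachable_iff_reflTransGen] at hxy ⊢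
  exact Relation.ReflTransGen.lift' id (fun a b hab => (reachable_iff_reflTransGen a b).mp
    (h a b hab)) _ _ hxy

lemma Reachable.of_sup_edge {G : SimpleGraph V} {u v x y : V}
    (h : (G ⊔ edge u v).Reachable x y) :
    G.Reachable x y ∨
      ((G.Reachable x u ∨ G.Reachable x v) ∧ (G.Reachable y u ∨ G.Reachable y v)) := by
  rw [reachable_iff_reflTransGen] at h
  induction h with
  | refl => exact Or.inl .rfl
  | @tail b c _ hbc ih =>
    rcases (sup_adj _ _ _ _).mp hbc with hbc | hbc
    · exact ih.imp (·.trans hbc.reachable) (And.imp_right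
        (Or.imp (hbc.symm.reachable.trans ·) (hbc.symm.reachable.trans ·)))
    · obtain ⟨hbc, -⟩ := (edge_adj ..).mp hbc
      have hx : G.Reachable x u ∨ G.Reachable x v := by
        rcases ih with hxb | ⟨hx, -⟩
        · rcases hbc with ⟨rfl, -⟩ | ⟨rfl, -⟩
          exacts [.inl hxb, .inr hxb]
        · exact hx
      rcases hbc with ⟨-, rfl⟩ | ⟨-, rfl⟩
      exacts [.inr ⟨hx, .inr .rfl⟩, .inr ⟨hx, .inl .rfl⟩]

lemma card_connectedComponent_le_sup_edge_add_one [Finite V] (G : SimpleGraph V) (u v : V) :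
    Nat.card G.ConnectedComponent ≤ Nat.card (G ⊔ edge u v).ConnectedComponent + 1 := by
  classical
  let f : G.ConnectedComponent → Option (G ⊔ edge u v).ConnectedComponent := fun C =>
    if C = G.connectedComponentMk v then none else some (C.map (Hom.ofLE le_sup_left))
  have hf : Function.Injective f := by
    intro C D hCD
    induction C using ConnectedComponent.ind with | h x => ?_
    induction D using ConnectedComponent.ind with | h y => ?_
    by_cases hx : G.connectedComponentMk x = G.connectedComponentMk v <;>
      by_cases hy : G.connectedComponentMk y = G.connectedComponentMk v <;>
      simp only [f, hx, hy, if_true, if_false, reduceCtorEq, Option.some.injEq] at hCD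
    · exact hx.trans hy.symm
    · rw [ConnectedComponent.eq] at hx hy ⊢
      rcases (ConnectedComponent.exact hCD).of_sup_edge with hxy | ⟨hxu | hxv, hyu | hyv⟩
      exacts [hxy, hxu.trans hyu.symm, (hy hyv).elim, (hx hxv).elim, (hx hxv).elim]
  simpa [Finite.card_option] using Nat.card_le_card_of_injective f hf

lemma card_connectedComponent_bot :
    Nat.card (⊥ : SimpleGraph V).ConnectedComponent = Nat.card V :=
  (Nat.card_congr (Equiv.ofBijective _
    ⟨fun _ _ h => reachable_bot.mp (ConnectedComponent.exact h), Quot.mk_surjective⟩)).symm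

end SimpleGraph

open SimpleGraph

open Classical in
lemma localComp_adj {G : SimpleGraph V} {v x y : V} :
    (localComp G v).Adj x y ↔
      x ≠ y ∧ if G.Adj v x ∧ G.Adj v y then ¬ G.Adj x y else G.Adj x y :=
  Iff.rfl

lemma localComp_reachable (G : SimpleGraph V) (v : V) :
    (localComp G v).Reachable = G.Reachable := by
  refine le_antisymm (reachable_le_of_adj fun a b hab => ?_)
    (reachable_le_of_adj fun a b hab => ?_)
  · obtain ⟨-, hab⟩ := localComp_adj.mp hab
    split_ifs at hab with hva
    · exact hva.1.symm.reachable.trans hva.2.reachable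
    · exact hab.reachable
  · by_cases hva : G.Adj v a ∧ G.Adj v b
    · have hav : (localComp G v).Adj a v := localComp_adj.mpr ⟨hva.1.ne', by simp [hva.1.symm]⟩
      have hvb : (localComp G v).Adj v b := localComp_adj.mpr ⟨hva.2.ne, by simp [hva.2]⟩
      exact hav.reachable.trans hvb.reachable
    · exact (localComp_adj.mpr ⟨hab.ne, by rwa [if_neg hva]⟩).reachable

lemma LocallyEquiv.reachable_eq {G H : SimpleGraph V} (h : LocallyEquiv G H) :
    G.Reachable = H.Reachable := by
  induction h with
  | refl => rfl
  | tail _ hstep ih =>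
    obtain ⟨v, rfl⟩ := hstep
    rw [ih, localComp_reachable]

lemma LocallyEquiv.card_connectedComponent_eq {G H : SimpleGraph V} (h : LocallyEquiv G H) :
    Nat.card G.ConnectedComponent = Nat.card H.ConnectedComponent := by
  show Nat.card (Quot G.Reachable) = Nat.card (Quot H.Reachable)
  rw [h.reachable_eq]

lemma toggle_adj {G : SimpleGraph V} {u v x y : V} :
    (toggle G u v).Adj x y ↔ x ≠ y ∧
      (G.Adj x y ∧ ¬ (x = u ∧ y = v ∨ x = v ∧ y = u) ∨
        (x = u ∧ y = v ∨ x = v ∧ y = u) ∧ ¬ G.Adj x y) :=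
  Iff.rfl

lemma toggle_lt {G : SimpleGraph V} {u v : V} (h : G.Adj u v) : toggle G u v < G := by
  refine lt_of_le_of_ne (fun a b hab => ?_) fun heq => ?_
  · rcases (toggle_adj.mp hab).2 with ⟨hab, -⟩ | ⟨⟨rfl, rfl⟩ | ⟨rfl, rfl⟩, hn⟩
    exacts [hab, (hn h).elim, (hn h.symm).elim]
  · have huv : (toggle G u v).Adj u v := by rwa [heq]
    rcases (toggle_adj.mp huv).2 with ⟨-, hn⟩ | ⟨-, hn⟩
    exacts [hn (Or.inl ⟨rfl, rfl⟩), hn h]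

lemma deleteEdges_le_toggle (G : SimpleGraph V) (u v : V) :
    G.deleteEdges {s(u, v)} ≤ toggle G u v := by
  intro a b hab
  rw [deleteEdges_adj] at hab
  exact toggle_adj.mpr ⟨hab.1.ne, Or.inl ⟨hab.1, by simpa [Sym2.eq_iff] using hab.2⟩⟩

lemma le_deleteEdges_sup_edge (G : SimpleGraph V) (u v : V) :
    G ≤ G.deleteEdges {s(u, v)} ⊔ edge u v := by
  intro a b hab
  by_cases he : s(a, b) = s(u, v)
  · exact Or.inr ((edge_adj ..).mpr ⟨by simpa [Sym2.eq_iff] using he, hab.ne⟩)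
  · exact Or.inl (deleteEdges_adj.mpr ⟨hab, he⟩)

lemma card_connectedComponent_toggle_le [Finite V] (G : SimpleGraph V) (u v : V) :
    Nat.card (toggle G u v).ConnectedComponent ≤ Nat.card G.ConnectedComponent + 1 :=
  calc Nat.card (toggle G u v).ConnectedComponent
      ≤ Nat.card (G.deleteEdges {s(u, v)}).ConnectedComponent :=
        ConnectedComponent.card_le_card_of_le (deleteEdges_le_toggle G u v)
    _ ≤ Nat.card (G.deleteEdges {s(u, v)} ⊔ edge u v).ConnectedComponent + 1 :=
        card_connectedComponent_le_sup_edge_add_one _ u v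
    _ ≤ Nat.card G.ConnectedComponent + 1 := by
        gcongr
        exact ConnectedComponent.card_le_card_of_le (le_deleteEdges_sup_edge G u v)

lemma CZle.card_connectedComponent_le [Finite V] {G H : SimpleGraph V} {k : ℕ}
    (h : CZle G H k) : Nat.card H.ConnectedComponent ≤ Nat.card G.ConnectedComponent + k := by
  induction h with
  | base hGH => exact hGH.card_connectedComponent_eq.ge
  | @step G G' F H k u v hGG' _ hF _ ih =>
    subst hF
    have := card_connectedComponent_toggle_le G' u v
    have := hGG'.card_connectedComponent_eq
    omega

lemma CZle.exists_bot [Finite V] (G : SimpleGraph V) : ∃ k, CZle G ⊥ k := by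
  induction G using WellFoundedLT.induction with | ind G ih => ?_
  by_cases hG : G = ⊥
  · exact ⟨0, hG ▸ .base .refl⟩
  · obtain ⟨u, v, huv⟩ := ne_bot_iff_exists_adj.mp hG
    obtain ⟨k, hk⟩ := ih _ (toggle_lt huv)
    exact ⟨k + 1, .step u v .refl huv.ne rfl hk⟩

theorem stmt4 [Fintype V] (G : SimpleGraph V) (n : ℕ) (hn : Fintype.card V = n)
    (hG : G.Connected) : n - 1 ≤ cz G := by
  obtain ⟨k, hk⟩ := CZle.exists_bot G
  have hcz : CZle G ⊥ (cz G) := Nat.sInf_mem ⟨k, hk⟩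
  have hbound := hcz.card_connectedComponent_le
  have hG1 : Nat.card G.ConnectedComponent ≤ 1 :=
    Finite.card_le_one_iff_subsingleton.mpr hG.preconnected.subsingleton_connectedComponent
  rw [card_connectedComponent_bot, Nat.card_eq_fintype_card, hn] at hbound
  omega
end

section
/- Let G be an n-vertex simple graph and let H be obtained from G by complementing on a set X ⊆ V(G) (replacing the induced subgraph on X by its complement). Then cz(G,H) ≤ 2n - 2. -/
variable {V : Type*}

/-!
Pick any vertex `v`. Toggling at most `n - 1` edges at `v` turns `G` into the graph `G₁` that agrees
with `G` away from `v` and in which `v` is adjacent exactly to `X \ {v}`. Local complementation of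
`G₁` at `v` complements the induced subgraph on `X \ {v}`, so it agrees with `complOn G X` away
from `v`, and at most `n - 1` further toggles at `v` reach `complOn G X`.
-/

open Classical

namespace CZle

theorem of_locallyEquiv_left {G G' H : SimpleGraph V} {k : ℕ} (h : LocallyEquiv G G')
    (hk : CZle G' H k) : CZle G H k := by
  cases hk with
  | base hG'H => exact .base (h.trans hG'H)
  | step u v hle huv hF hk => exact .step u v (h.trans hle) huv hF hk

theorem trans {G G' H : SimpleGraph V} {j k : ℕ} (h₁ : CZle G G' j) (h₂ : CZle G' H k) :
    CZle G H (j + k) := by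
  induction h₁ generalizing H k with
  | base h => simpa using of_locallyEquiv_left h h₂
  | step u v hle huv hF _ ih =>
    rw [Nat.add_right_comm]
    exact .step u v hle huv hF (ih h₂)

end CZle

theorem czDist_self (G : SimpleGraph V) : czDist G G = 0 :=
  Nat.eq_zero_of_le_zero (Nat.sInf_le (CZle.base .refl))

theorem toggle_adj_of_ne {G : SimpleGraph V} {u v a b : V} (ha : a ≠ u) (hb : b ≠ u) :
    (toggle G u v).Adj a b ↔ G.Adj a b := by
  simp only [toggle, Xor', xor_iff_not_iff, ha, hb, false_and, and_false, or_false, iff_false,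
    not_not]
  exact and_iff_right_of_imp G.ne_of_adj

theorem toggle_adj_left {G : SimpleGraph V} {u v : V} (huv : u ≠ v) (y : V) :
    (toggle G u v).Adj u y ↔ (G.Adj u y ↔ y ≠ v) := by
  have := G.ne_of_adj (a := u) (b := y)
  simp only [toggle, Xor', xor_iff_not_iff]
  grind

noncomputable def nbrDiff [Fintype V] (G H : SimpleGraph V) (v : V) : Finset V :=
  {x | ¬ (G.Adj v x ↔ H.Adj v x)}

theorem mem_nbrDiff [Fintype V] {G H : SimpleGraph V} {v x : V} :
    x ∈ nbrDiff G H v ↔ ¬ (G.Adj v x ↔ H.Adj v x) := by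
  simp [nbrDiff]

theorem card_nbrDiff_le [Fintype V] (G H : SimpleGraph V) (v : V) :
    (nbrDiff G H v).card ≤ Fintype.card V - 1 := by
  have hv : v ∉ nbrDiff G H v := by simp [mem_nbrDiff]
  have := Finset.card_lt_univ_of_notMem hv
  omega

def AgreeOff (v : V) (G H : SimpleGraph V) : Prop :=
  ∀ ⦃x y⦄, x ≠ v → y ≠ v → (G.Adj x y ↔ H.Adj x y)

theorem AgreeOff.symm {v : V} {G H : SimpleGraph V} (h : AgreeOff v G H) : AgreeOff v H G :=
  fun _ _ hx hy => (h hx hy).symm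

theorem AgreeOff.trans {v : V} {F G H : SimpleGraph V} (h₁ : AgreeOff v F G)
    (h₂ : AgreeOff v G H) : AgreeOff v F H :=
  fun _ _ hx hy => (h₁ hx hy).trans (h₂ hx hy)

theorem AgreeOff.eq {v : V} {G H : SimpleGraph V} (h : AgreeOff v G H)
    (hv : ∀ x, G.Adj v x ↔ H.Adj v x) : G = H := by
  ext a b
  by_cases ha : a = v
  · subst ha; exact hv b
  by_cases hb : b = v
  · subst hb; rw [G.adj_comm, H.adj_comm]; exact hv a
  exact h ha hb

theorem toggle_agreeOff (G : SimpleGraph V) (v x : V) : AgreeOff v (toggle G v x) G :=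
  fun _ _ ha hb => toggle_adj_of_ne ha hb

theorem nbrDiff_toggle [Fintype V] {G H : SimpleGraph V} {v x : V} (hvx : v ≠ x)
    (hx : x ∈ nbrDiff G H v) : nbrDiff (toggle G v x) H v = (nbrDiff G H v).erase x := by
  ext y
  rw [mem_nbrDiff] at hx
  simp only [Finset.mem_erase, mem_nbrDiff, toggle_adj_left hvx]
  by_cases hy : y = x
  · subst hy; tauto
  · tauto

/-- Toggling the edges `vx` for `x ∈ nbrDiff G H v` one at a time turns `G` into `H`. -/
theorem CZle.of_agreeOff [Fintype V] {v : V} {G H : SimpleGraph V} (h : AgreeOff v G H) :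
    CZle G H (nbrDiff G H v).card := by
  induction hk : (nbrDiff G H v).card generalizing G with
  | zero =>
    rw [Finset.card_eq_zero] at hk
    rw [h.eq fun x => not_not.1 fun hx => by simpa [hk] using mem_nbrDiff.2 hx]
    exact .base .refl
  | succ k ih =>
    obtain ⟨x, hx⟩ := (nbrDiff G H v).card_pos.1 (by omega)
    have hvx : v ≠ x := by rintro rfl; exact mem_nbrDiff.1 hx (by simp)
    refine .step v x .refl hvx rfl (ih ((toggle_agreeOff G v x).trans h) ?_)
    rw [nbrDiff_toggle hvx hx, Finset.card_erase_of_mem hx, hk, Nat.add_sub_cancel]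

theorem exists_czle_le_of_agreeOff [Fintype V] {v : V} {G H : SimpleGraph V}
    (h : AgreeOff v G H) : ∃ k ≤ Fintype.card V - 1, CZle G H k :=
  ⟨_, card_nbrDiff_le G H v, .of_agreeOff h⟩

def withNeighborhood (G : SimpleGraph V) (v : V) (S : Set V) : SimpleGraph V :=
  SimpleGraph.fromRel fun a b => (a = v ∧ b ∈ S) ∨ (a ≠ v ∧ b ≠ v ∧ G.Adj a b)

theorem withNeighborhood_agreeOff (G : SimpleGraph V) (v : V) (S : Set V) :
    AgreeOff v (withNeighborhood G v S) G := by
  intro a b ha hb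
  simp only [withNeighborhood, SimpleGraph.fromRel_adj, ne_eq, ha, hb, not_false_eq_true,
    false_and, true_and, false_or, G.adj_comm b a, or_self]
  exact and_iff_right_of_imp G.ne_of_adj

theorem withNeighborhood_adj_left (G : SimpleGraph V) {v b : V} (S : Set V) (hb : b ≠ v) :
    (withNeighborhood G v S).Adj v b ↔ b ∈ S := by
  simp only [withNeighborhood, SimpleGraph.fromRel_adj, ne_eq, hb, hb.symm, not_true_eq_false,
    not_false_eq_true, true_and, false_and, and_false, or_false]

theorem complOn_adj {G : SimpleGraph V} {X : Set V} {a b : V} :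
    (complOn G X).Adj a b ↔
      a ≠ b ∧ (if a ∈ X ∧ b ∈ X then ¬ G.Adj a b else G.Adj a b) := by
  rw [complOn, SimpleGraph.fromRel_adj]
  simp only [G.adj_comm b a, and_comm (a := b ∈ X), or_self]

theorem localComp_withNeighborhood_agreeOff (G : SimpleGraph V) (v : V) (X : Set V) :
    AgreeOff v (localComp (withNeighborhood G v X) v) (complOn G X) := by
  intro a b ha hb
  simp only [localComp, complOn_adj, withNeighborhood_adj_left G X ha,
    withNeighborhood_adj_left G X hb, withNeighborhood_agreeOff G v X ha hb]

theorem stmt7 [Fintype V] (G : SimpleGraph V) (n : ℕ) (hn : Fintype.card V = n)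
    (X : Set V) : czDist G (complOn G X) ≤ 2 * n - 2 := by
  rcases isEmpty_or_nonempty V with _ | ⟨⟨v⟩⟩
  · simp [Subsingleton.elim (complOn G X) G, czDist_self]
  obtain ⟨k₁, hk₁, h₁⟩ := exists_czle_le_of_agreeOff (withNeighborhood_agreeOff G v X).symm
  obtain ⟨k₂, hk₂, h₂⟩ := exists_czle_le_of_agreeOff (localComp_withNeighborhood_agreeOff G v X)
  have hle : LocallyEquiv (withNeighborhood G v X) (localComp (withNeighborhood G v X) v) :=
    .single ⟨v, rfl⟩
  calc czDist G (complOn G X) ≤ k₁ + k₂ := Nat.sInf_le (h₁.trans (h₂.of_locallyEquiv_left hle))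
    _ ≤ 2 * n - 2 := by omega
end
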